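/- Let C, R > 0 and let φ ∈ C^2(ℝ^d) have compact support contained in the closed ball B̄_R, with ‖∇φ‖_{L^∞(ℝ^d)} ≤ C R^{−1} and ‖D²φ‖_{L^∞(ℝ^d)} ≤ C R^{−2}. Then there exist constants C̃ > 0 depending only on d, s, Λ and C, and γ > 0 depending only on s (one may take γ = 1−2s if s < 1/2, γ = 2−2s if s > 1/2, and γ = 1/2 if s = 1/2), such that for all x, y ∈ ℝ^d, |M_ρ^± φ(x) − M_ρ^± φ(y)| ≤ (C̃/R^{2s}) (|x−y|/R)^γ (both for M_ρ^+ and for M_ρ^−). -/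

import Mathlib

open MeasureTheory Metric Set
open scoped Classical

noncomputable section

abbrev Ed (d : ℕ) := EuclideanSpace ℝ (Fin d)

/-- `min{|y|^{-d-2s}, ρ^{-d-2s}}`, with the convention that it equals `|y|^{-d-2s}` when `ρ = 0`. -/
def truncKer (d : ℕ) (s ρ : ℝ) (y : Ed d) : ℝ :=
  if ρ = 0 then ‖y‖ ^ (-(d : ℝ) - 2 * s)
  else min (‖y‖ ^ (-(d : ℝ) - 2 * s)) (ρ ^ (-(d : ℝ) - 2 * s))

/-- The kernel class `𝒦_ρ` with ellipticity constants `lam ≤ Lam` and order `2s`. -/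
def KernelClass (d : ℕ) (s lam Lam ρ : ℝ) : Set (Ed d → ℝ) :=
  {K | Measurable K ∧ (∀ y, 0 ≤ K y) ∧
    (∀ y : Ed d, y ≠ 0 → lam * truncKer d s ρ y ≤ K y) ∧
    (∀ r : ℝ, 0 < r →
      ∫⁻ y in ball (0 : Ed d) (2 * r) \ ball 0 r, ENNReal.ofReal (K y) ≤
        ENNReal.ofReal (Lam * r ^ (-(2 * s)))) ∧
    (s = 1 / 2 → ∀ r : ℝ, 0 < r →
      (∫ y in ball (0 : Ed d) (2 * r) \ ball 0 r, K y • y) = (0 : Ed d))}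

/-- The increment `δ_y u (x)`, whose form depends on whether `s < 1/2`, `s = 1/2` or `s > 1/2`. -/
def incr (d : ℕ) (s : ℝ) (u : Ed d → ℝ) (x y : Ed d) : ℝ :=
  if s < 1 / 2 then u (x + y) - u x
  else if s = 1 / 2 then u (x + y) - u x - (if ‖y‖ < 1 then fderiv ℝ u x y else 0)
  else u (x + y) - u x - fderiv ℝ u x y

/-- The linear integro-differential operator `L_K u (x) = ∫ δ_y u(x) K(y) dy`. -/
def opL (d : ℕ) (s : ℝ) (K u : Ed d → ℝ) (x : Ed d) : ℝ :=
  ∫ y, incr d s u x y * K y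

/-- Pucci extremal operator `M_ρ^- u(x) = inf_{K ∈ 𝒦_ρ} L_K u (x)`. -/
def pucciInf (d : ℕ) (s lam Lam ρ : ℝ) (u : Ed d → ℝ) (x : Ed d) : ℝ :=
  sInf ((fun K => opL d s K u x) '' KernelClass d s lam Lam ρ)

/-- Pucci extremal operator `M_ρ^+ u(x) = sup_{K ∈ 𝒦_ρ} L_K u (x)`. -/
def pucciSup (d : ℕ) (s lam Lam ρ : ℝ) (u : Ed d → ℝ) (x : Ed d) : ℝ :=
  sSup ((fun K => opL d s K u x) '' KernelClass d s lam Lam ρ)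

/-- Parabolic distance `d((x,t),(y,τ)) = max{|x-y|, |t-τ|^{1/(2s)}}`. -/
def parDist (d : ℕ) (s : ℝ) (p q : Ed d × ℝ) : ℝ :=
  max ‖p.1 - q.1‖ (|p.2 - q.2| ^ (1 / (2 * s)))

/-- The function `v` that equals the test function `φ` on the test cylinder
`B_ε(x₀) × (t₀-ε, t₀]` and `u` elsewhere. -/
def patchFn (d : ℕ) (u φ : Ed d → ℝ → ℝ) (x₀ : Ed d) (t₀ ε : ℝ) : Ed d → ℝ → ℝ :=
  fun x t => if x ∈ ball x₀ ε ∧ t ∈ Ioc (t₀ - ε) t₀ then φ x t else u x t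

/-- `φ` is an admissible (parabolic) test function on the cylinder `B_ε(x₀) × (t₀-ε, t₀]`:
`C^{1,1}` in space and left-differentiable in time. -/
def IsTestFn (d : ℕ) (φ : Ed d → ℝ → ℝ) (x₀ : Ed d) (t₀ ε : ℝ) : Prop :=
  (∀ t ∈ Ioc (t₀ - ε) t₀, ∀ x ∈ ball x₀ ε, DifferentiableAt ℝ (fun z => φ z t) x) ∧
  (∀ t ∈ Ioc (t₀ - ε) t₀, ∃ L : NNReal,
    LipschitzOnWith L (fun x => fderiv ℝ (fun z => φ z t) x) (ball x₀ ε)) ∧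
  (∀ x ∈ ball x₀ ε, ∀ t ∈ Ioc (t₀ - ε) t₀,
    ∃ D : ℝ, HasDerivWithinAt (fun τ => φ x τ) D (Iic t) t)

/-- Viscosity supersolution of `∂ₜ u + drift·|∇u| − M u ≥ f` in `Ω × I`. -/
def IsViscSuper (d : ℕ) (drift : ℝ) (M : (Ed d → ℝ) → Ed d → ℝ)
    (f : Ed d → ℝ → ℝ) (Ω : Set (Ed d)) (I : Set ℝ) (u : Ed d → ℝ → ℝ) : Prop :=
  LowerSemicontinuousOn (fun p : Ed d × ℝ => u p.1 p.2) (Ω ×ˢ I) ∧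
  ∀ x₀ ∈ Ω, ∀ t₀ ∈ I, ∀ ε : ℝ, 0 < ε → ball x₀ ε ⊆ Ω → Ioc (t₀ - ε) t₀ ⊆ I →
    ∀ φ : Ed d → ℝ → ℝ, IsTestFn d φ x₀ t₀ ε → φ x₀ t₀ = u x₀ t₀ →
      (∀ x ∈ ball x₀ ε, ∀ t ∈ Ioc (t₀ - ε) t₀, φ x t ≤ u x t) →
      f x₀ t₀ ≤
        derivWithin (patchFn d u φ x₀ t₀ ε x₀) (Iic t₀) t₀
          + drift * ‖fderiv ℝ (fun z => patchFn d u φ x₀ t₀ ε z t₀) x₀‖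
          - M (fun z => patchFn d u φ x₀ t₀ ε z t₀) x₀

/-- Viscosity subsolution of `∂ₜ u − drift·|∇u| − M u ≤ f` in `Ω × I`. -/
def IsViscSub (d : ℕ) (drift : ℝ) (M : (Ed d → ℝ) → Ed d → ℝ)
    (f : Ed d → ℝ → ℝ) (Ω : Set (Ed d)) (I : Set ℝ) (u : Ed d → ℝ → ℝ) : Prop :=
  UpperSemicontinuousOn (fun p : Ed d × ℝ => u p.1 p.2) (Ω ×ˢ I) ∧
  ∀ x₀ ∈ Ω, ∀ t₀ ∈ I, ∀ ε : ℝ, 0 < ε → ball x₀ ε ⊆ Ω → Ioc (t₀ - ε) t₀ ⊆ I →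
    ∀ φ : Ed d → ℝ → ℝ, IsTestFn d φ x₀ t₀ ε → φ x₀ t₀ = u x₀ t₀ →
      (∀ x ∈ ball x₀ ε, ∀ t ∈ Ioc (t₀ - ε) t₀, u x t ≤ φ x t) →
      derivWithin (patchFn d u φ x₀ t₀ ε x₀) (Iic t₀) t₀
          - drift * ‖fderiv ℝ (fun z => patchFn d u φ x₀ t₀ ε z t₀) x₀‖
          - M (fun z => patchFn d u φ x₀ t₀ ε z t₀) x₀ ≤ f x₀ t₀

/-!
Each `L_K φ (x)` integrates the increment `δ_z φ (x)` against `K`. The bounds on `∇φ`, `D²φ` and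
the support of `φ` bound the increment, and its variation between two points `x` and `y`, by
`A · min (|z|^p, h^(p-q) |z|^q)` with `q < 2s < p`: `(p, q) = (1, 0)` if `s < 1/2` and `(2, 1)` if
`s > 1/2`. Summing the upper bound (ii) of the kernel class over dyadic annuli turns such a bound
into `A Λ h^(p-2s)` uniformly in `K`, and `h = |x - y|`, `A ≈ C R^(-p)` give
`R^(-2s) (|x - y| / R)^(p-2s)` for every `L_K`, hence for their infimum and supremum.
For `s = 1/2` the gradient term is cut off at radius `1`, which breaks the scaling; the
cancellation (iii) moves the cutoff to a dyadic radius `r ≈ √(|x - y| R)`, where the two pointwise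
bounds balance.
-/

open scoped ENNReal

namespace PucciHolder

section RealFacts

lemma one_sub_two_rpow_pos {e : ℝ} (he : e < 0) : 0 < 1 - (2 : ℝ) ^ e := by
  linarith [Real.rpow_lt_one_of_one_lt_of_neg one_lt_two he]

/-- The sum of the two geometric series of the dyadic decomposition in
`lintegral_min_rpow_mul_le`: over the annuli inside radius `h` and outside it. -/
def dyadicConst (s p q : ℝ) : ℝ :=
  2 ^ (2 * s) / (1 - 2 ^ (2 * s - p)) + 2 ^ q / (1 - 2 ^ (q - 2 * s))

lemma dyadicConst_pos {s p q : ℝ} (hq : q < 2 * s) (hp : 2 * s < p) : 0 < dyadicConst s p q := by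
  have h₁ := one_sub_two_rpow_pos (show 2 * s - p < 0 by linarith)
  have h₂ := one_sub_two_rpow_pos (show q - 2 * s < 0 by linarith)
  unfold dyadicConst
  positivity

lemma tsum_ofReal_mul_pow {u w : ℝ} (hu : 0 ≤ u) (hw₀ : 0 ≤ w) (hw₁ : w < 1) :
    ∑' n : ℕ, ENNReal.ofReal (u * w ^ n) = ENNReal.ofReal (u / (1 - w)) := by
  simp_rw [ENNReal.ofReal_mul hu, ENNReal.ofReal_pow hw₀]
  rw [ENNReal.tsum_mul_left, ENNReal.tsum_geometric, ← ENNReal.ofReal_one,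
    ← ENNReal.ofReal_sub 1 hw₀, ← ENNReal.ofReal_inv_of_pos (by linarith),
    ← ENNReal.ofReal_mul hu, div_eq_mul_inv]

lemma mul_two_pow_rpow {h : ℝ} (hh : 0 ≤ h) (n : ℕ) (e : ℝ) :
    (h * 2 ^ n) ^ e = h ^ e * ((2 : ℝ) ^ e) ^ n := by
  rw [Real.mul_rpow hh (by positivity), ← Real.rpow_natCast_mul zero_le_two,
    mul_comm (n : ℝ), Real.rpow_mul_natCast zero_le_two]

lemma div_two_pow_rpow {h : ℝ} (hh : 0 ≤ h) (n : ℕ) (e : ℝ) :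
    (h / 2 ^ n) ^ e = h ^ e * ((2 : ℝ) ^ (-e)) ^ n := by
  rw [div_eq_mul_inv, ← inv_pow, Real.mul_rpow hh (by positivity),
    ← Real.rpow_natCast_mul (by norm_num), Real.inv_rpow zero_le_two, ← Real.rpow_neg zero_le_two,
    mul_comm (n : ℝ), ← neg_mul, Real.rpow_mul_natCast zero_le_two]

lemma le_mul_min_sq_of_le {G t r a b : ℝ} (ht : 0 ≤ t) (hr : 0 < r) (ha : 0 ≤ a) (hb : 0 ≤ b)
    (hsmall : t < r → G ≤ a * t ^ 2) (hlarge : r ≤ t → G ≤ b) :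
    G ≤ (a + b / r ^ 2) * min (t ^ 2) (r ^ 2) := by
  have hbr : 0 ≤ b / r ^ 2 := by positivity
  rcases lt_or_ge t r with htr | hrt
  · rw [min_eq_left (pow_le_pow_left₀ ht htr.le 2)]
    nlinarith [hsmall htr, sq_nonneg t]
  · rw [min_eq_right (pow_le_pow_left₀ hr.le hrt 2), add_mul, div_mul_cancel₀ _ (by positivity)]
    nlinarith [hlarge hrt, sq_nonneg r]

/-- The witness is the dyadic scale with `2 ^ j ≤ √(b / a) < 2 ^ (j + 1)`. -/
lemma exists_zpow_mul_add_div_le {a b : ℝ} (ha : 0 < a) (hb : 0 < b) :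
    ∃ j : ℤ, a * 2 ^ j + b / 2 ^ j ≤ 3 * √(a * b) := by
  set m := √(a * b)
  have hm : 0 < m := Real.sqrt_pos.2 (mul_pos ha hb)
  have hmm : m * m = a * b := Real.mul_self_sqrt (mul_pos ha hb).le
  obtain ⟨j, hj₁, hj₂⟩ := exists_mem_Ico_zpow (div_pos hm ha) one_lt_two
  have h2j : (0 : ℝ) < 2 ^ j := zpow_pos two_pos j
  rw [zpow_add_one₀ two_ne_zero] at hj₂
  refine ⟨j, ?_⟩
  have h₁ : a * 2 ^ j ≤ m := by rwa [le_div_iff₀' ha] at hj₁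
  have h₂ : b / 2 ^ j ≤ 2 * m := by
    rw [div_le_iff₀ h2j]
    rw [div_lt_iff₀ ha] at hj₂
    nlinarith
  linarith

end RealFacts

section KernelIntegrals

variable {E : Type*} [NormedAddCommGroup E]

def annulus (r : ℝ) : Set E := ball 0 (2 * r) \ ball 0 r

lemma mem_annulus {r : ℝ} {z : E} : z ∈ annulus r ↔ r ≤ ‖z‖ ∧ ‖z‖ < 2 * r := by
  simp [annulus, and_comm]

variable [MeasurableSpace E]

/-- Condition (ii) of the kernel class. -/
def AnnulusBound (μ : Measure E) (s Lam : ℝ) (K : E → ℝ) : Prop :=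
  ∀ r : ℝ, 0 < r →
    ∫⁻ y in annulus r, ENNReal.ofReal (K y) ∂μ ≤ ENNReal.ofReal (Lam * r ^ (-(2 * s)))

variable {μ : Measure E} {s Lam : ℝ} {K : E → ℝ}

lemma setLIntegral_annulus_mul_le (hKm : Measurable K) (hK : AnnulusBound μ s Lam K)
    {r c : ℝ} (hr : 0 < r) (hc : 0 ≤ c) {G : E → ℝ} (hG : ∀ z ∈ annulus r, G z ≤ c) :
    ∫⁻ z in annulus r, ENNReal.ofReal (G z) * ENNReal.ofReal (K z) ∂μ ≤
      ENNReal.ofReal (c * (Lam * r ^ (-(2 * s)))) :=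
  calc _ ≤ ∫⁻ z in annulus r, ENNReal.ofReal c * ENNReal.ofReal (K z) ∂μ :=
        setLIntegral_mono (measurable_const.mul hKm.ennreal_ofReal) fun z hz => by
          gcongr; exact hG z hz
    _ = ENNReal.ofReal c * ∫⁻ z in annulus r, ENNReal.ofReal (K z) ∂μ :=
        lintegral_const_mul _ hKm.ennreal_ofReal
    _ ≤ _ := by rw [ENNReal.ofReal_mul hc]; gcongr; exact hK r hr

variable [OpensMeasurableSpace E]

lemma measurableSet_annulus (r : ℝ) : MeasurableSet (annulus r : Set E) :=
  measurableSet_ball.diff measurableSet_ball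

lemma lintegral_le_tsum_annulus {F : E → ℝ≥0∞} (hF₀ : F 0 = 0) {h : ℝ} (hh : 0 < h) :
    ∫⁻ z, F z ∂μ ≤ ∑' n : ℕ, ∫⁻ z in annulus (h * 2 ^ n), F z ∂μ +
      ∑' n : ℕ, ∫⁻ z in annulus (h / 2 ^ (n + 1)), F z ∂μ := by
  have hF : ∀ z, F z ≤ (⋃ k : ℤ, annulus (h * 2 ^ k)).indicator F z := by
    intro z
    rcases eq_or_ne z 0 with rfl | hz
    · simp [hF₀]
    obtain ⟨k, hk₁, hk₂⟩ := exists_mem_Ico_zpow (div_pos (norm_pos_iff.2 hz) hh) one_lt_two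
    rw [le_div_iff₀' hh] at hk₁
    rw [zpow_add_one₀ two_ne_zero, div_lt_iff₀' hh] at hk₂
    rw [indicator_of_mem (mem_iUnion.2 ⟨k, mem_annulus.2 ⟨hk₁, by linarith⟩⟩)]
  have h2 : ∀ n : ℕ, (2 : ℝ) ^ (-((n : ℤ) + 1)) = (2 ^ (n + 1))⁻¹ := fun n => by
    rw [zpow_neg, ← Nat.cast_succ, zpow_natCast]
  calc ∫⁻ z, F z ∂μ ≤ ∫⁻ z in ⋃ k : ℤ, annulus (h * 2 ^ k), F z ∂μ :=
        (lintegral_mono hF).trans_eq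
          (lintegral_indicator (MeasurableSet.iUnion fun _ => measurableSet_annulus _) F)
    _ ≤ ∑' k : ℤ, ∫⁻ z in annulus (h * 2 ^ k), F z ∂μ := lintegral_iUnion_le _ _
    _ = _ := by
        rw [tsum_of_nat_of_neg_add_one ENNReal.summable ENNReal.summable]
        simp only [zpow_natCast, h2, div_eq_mul_inv]

/-- On the annulus at scale `r` the weight is `≤ (2r)^p` and `≤ h^(p-q) (2r)^q`; the first bound
is summable over the scales `r < h`, the second over `r ≥ h`. -/
lemma lintegral_min_rpow_mul_le (hKm : Measurable K) (hK : AnnulusBound μ s Lam K)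
    (hLam : 0 ≤ Lam) {p q h : ℝ} (hq₀ : 0 ≤ q) (hq : q < 2 * s) (hp : 2 * s < p) (hh : 0 < h) :
    ∫⁻ z, ENNReal.ofReal (min (‖z‖ ^ p) (h ^ (p - q) * ‖z‖ ^ q)) * ENNReal.ofReal (K z) ∂μ ≤
      ENNReal.ofReal (Lam * dyadicConst s p q * h ^ (p - 2 * s)) := by
  refine (lintegral_le_tsum_annulus (by simp [Real.zero_rpow (by linarith : p ≠ 0)]) hh).trans ?_
  have hout : ∀ n : ℕ, ∫⁻ z in annulus (h * 2 ^ n),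
      ENNReal.ofReal (min (‖z‖ ^ p) (h ^ (p - q) * ‖z‖ ^ q)) * ENNReal.ofReal (K z) ∂μ ≤
      ENNReal.ofReal (Lam * h ^ (p - 2 * s) * 2 ^ q * ((2 : ℝ) ^ (q - 2 * s)) ^ n) := by
    intro n
    refine (setLIntegral_annulus_mul_le hKm hK (by positivity)
      (c := h ^ (p - q) * (h * 2 ^ (n + 1)) ^ q) (by positivity) fun z hz => ?_).trans_eq ?_
    · have h2r : 2 * (h * 2 ^ n) = h * 2 ^ (n + 1) := by ring
      exact (min_le_right _ _).trans (by gcongr; linarith [(mem_annulus.1 hz).2])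
    · congr 1
      rw [mul_two_pow_rpow hh.le, mul_two_pow_rpow hh.le,
        show p - 2 * s = (p - q) + q + -(2 * s) by ring, Real.rpow_add hh, Real.rpow_add hh,
        sub_eq_add_neg q, Real.rpow_add two_pos, mul_pow, pow_succ]
      ring
  have hin : ∀ n : ℕ, ∫⁻ z in annulus (h / 2 ^ (n + 1)),
      ENNReal.ofReal (min (‖z‖ ^ p) (h ^ (p - q) * ‖z‖ ^ q)) * ENNReal.ofReal (K z) ∂μ ≤
      ENNReal.ofReal (Lam * h ^ (p - 2 * s) * 2 ^ (2 * s) * ((2 : ℝ) ^ (2 * s - p)) ^ n) := by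
    intro n
    refine (setLIntegral_annulus_mul_le hKm hK (by positivity)
      (c := (h / 2 ^ n) ^ p) (by positivity) fun z hz => ?_).trans_eq ?_
    · have h2r : 2 * (h / 2 ^ (n + 1)) = h / 2 ^ n := by rw [pow_succ]; field_simp
      exact (min_le_left _ _).trans (by gcongr <;> linarith [(mem_annulus.1 hz).2])
    · congr 1
      rw [div_two_pow_rpow hh.le, div_two_pow_rpow hh.le, neg_neg, sub_eq_add_neg p,
        Real.rpow_add hh, sub_eq_add_neg (2 * s), Real.rpow_add two_pos, mul_pow, pow_succ]
      ring
  have hw₁ := one_sub_two_rpow_pos (show 2 * s - p < 0 by linarith)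
  have hw₂ := one_sub_two_rpow_pos (show q - 2 * s < 0 by linarith)
  refine (add_le_add (ENNReal.tsum_le_tsum hout) (ENNReal.tsum_le_tsum hin)).trans_eq ?_
  rw [tsum_ofReal_mul_pow (by positivity) (by positivity) (by linarith),
    tsum_ofReal_mul_pow (by positivity) (by positivity) (by linarith),
    ← ENNReal.ofReal_add (by positivity) (by positivity)]
  congr 1
  unfold dyadicConst
  ring

lemma integrable_mul_and_abs_integral_le (hKm : Measurable K) (hK₀ : ∀ z, 0 ≤ K z)
    (hK : AnnulusBound μ s Lam K) (hLam : 0 ≤ Lam) {p q h A : ℝ} (hq₀ : 0 ≤ q) (hq : q < 2 * s)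
    (hp : 2 * s < p) (hh : 0 < h) (hA : 0 ≤ A) {g : E → ℝ} (hgm : AEStronglyMeasurable g μ)
    (hg : ∀ z, |g z| ≤ A * min (‖z‖ ^ p) (h ^ (p - q) * ‖z‖ ^ q)) :
    Integrable (fun z => g z * K z) μ ∧
      |∫ z, g z * K z ∂μ| ≤ A * Lam * dyadicConst s p q * h ^ (p - 2 * s) := by
  have hc := dyadicConst_pos hq hp
  have hlin : ∫⁻ z, ENNReal.ofReal ‖g z * K z‖ ∂μ ≤
      ENNReal.ofReal (A * Lam * dyadicConst s p q * h ^ (p - 2 * s)) :=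
    calc ∫⁻ z, ENNReal.ofReal ‖g z * K z‖ ∂μ
        ≤ ∫⁻ z, ENNReal.ofReal A * (ENNReal.ofReal (min (‖z‖ ^ p) (h ^ (p - q) * ‖z‖ ^ q)) *
            ENNReal.ofReal (K z)) ∂μ := lintegral_mono fun z => by
          rw [← ENNReal.ofReal_mul (by positivity), ← ENNReal.ofReal_mul hA, ← mul_assoc,
            norm_mul, Real.norm_eq_abs, Real.norm_eq_abs, abs_of_nonneg (hK₀ z)]
          gcongr
          · exact hK₀ z
          · exact hg z
      _ = ENNReal.ofReal A * ∫⁻ z, ENNReal.ofReal (min (‖z‖ ^ p) (h ^ (p - q) * ‖z‖ ^ q)) *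
            ENNReal.ofReal (K z) ∂μ := lintegral_const_mul' _ _ ENNReal.ofReal_ne_top
      _ ≤ ENNReal.ofReal A * ENNReal.ofReal (Lam * dyadicConst s p q * h ^ (p - 2 * s)) := by
          gcongr; exact lintegral_min_rpow_mul_le hKm hK hLam hq₀ hq hp hh
      _ = _ := by rw [← ENNReal.ofReal_mul hA]; ring_nf
  have hint : Integrable (fun z => g z * K z) μ :=
    ⟨hgm.mul hKm.aestronglyMeasurable, by
      rw [hasFiniteIntegral_iff_norm]; exact hlin.trans_lt ENNReal.ofReal_lt_top⟩
  refine ⟨hint, ?_⟩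
  rw [← Real.norm_eq_abs]
  exact (norm_integral_le_lintegral_norm _).trans
    (ENNReal.toReal_le_of_le_ofReal (by positivity) hlin)

end KernelIntegrals

section Cancellation

variable {E : Type*} [NormedAddCommGroup E] [NormedSpace ℝ E]
  [MeasurableSpace E] [BorelSpace E] [SecondCountableTopology E]
  {μ : Measure E} {s Lam : ℝ} {K : E → ℝ}

lemma integrableOn_smul_annulus (hKm : Measurable K) (hK₀ : ∀ z, 0 ≤ K z)
    (hK : AnnulusBound μ s Lam K) {r : ℝ} (hr : 0 < r) :
    IntegrableOn (fun z => K z • z) (annulus r) μ := by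
  refine ⟨(hKm.smul measurable_id).aestronglyMeasurable, ?_⟩
  rw [hasFiniteIntegral_iff_norm]
  calc ∫⁻ z in annulus r, ENNReal.ofReal ‖K z • z‖ ∂μ
      = ∫⁻ z in annulus r, ENNReal.ofReal ‖z‖ * ENNReal.ofReal (K z) ∂μ := by
        simp_rw [norm_smul, Real.norm_eq_abs, abs_of_nonneg (hK₀ _),
          ENNReal.ofReal_mul (hK₀ _), mul_comm]
    _ ≤ ENNReal.ofReal (2 * r * (Lam * r ^ (-(2 * s)))) :=
        setLIntegral_annulus_mul_le hKm hK hr (by positivity) fun z hz =>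
          (mem_annulus.1 hz).2.le
    _ < ⊤ := ENNReal.ofReal_lt_top

variable [CompleteSpace E]

lemma integrableOn_and_setIntegral_clm_mul_eq_zero (hKm : Measurable K) (hK₀ : ∀ z, 0 ≤ K z)
    (hK : AnnulusBound μ s Lam K) (hKc : ∀ r : ℝ, 0 < r → ∫ y in annulus r, K y • y ∂μ = 0)
    (w : E →L[ℝ] ℝ) {r : ℝ} (hr : 0 < r) :
    IntegrableOn (fun z => w z * K z) (annulus r) μ ∧ ∫ z in annulus r, w z * K z ∂μ = 0 := by
  have hint := integrableOn_smul_annulus hKm hK₀ hK hr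
  have hw : (fun z => w z * K z) = fun z => w (K z • z) := by ext z; simp [mul_comm]
  rw [hw]
  exact ⟨w.integrable_comp hint, by rw [w.integral_comp_comm hint, hKc r hr, map_zero]⟩

/-- Telescoping condition (iii) of the kernel class over the dyadic annuli between the radii `1`
and `2 ^ j`. -/
lemma integrable_and_integral_indicator_sub_eq_zero (hKm : Measurable K) (hK₀ : ∀ z, 0 ≤ K z)
    (hK : AnnulusBound μ s Lam K)
    (hKc : ∀ r : ℝ, 0 < r → ∫ y in annulus r, K y • y ∂μ = 0) (w : E →L[ℝ] ℝ) (j : ℤ) :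
    Integrable (fun z => ((ball 0 (2 ^ j)).indicator w z - (ball 0 1).indicator w z) * K z) μ ∧
      ∫ z, ((ball 0 (2 ^ j)).indicator w z - (ball 0 1).indicator w z) * K z ∂μ = 0 := by
  let f : ℝ → ℝ → E → ℝ := fun a b z =>
    ((ball 0 a).indicator w z - (ball 0 b).indicator w z) * K z
  let P : ℝ → ℝ → Prop := fun a b => Integrable (f a b) μ ∧ ∫ z, f a b z ∂μ = 0
  have step : ∀ r : ℝ, 0 < r → P (2 * r) r := by
    intro r hr
    have hf : f (2 * r) r = (annulus r).indicator fun z => w z * K z := by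
      ext z
      rw [indicator_mul_left, annulus, indicator_sdiff (ball_subset_ball (by linarith)),
        Pi.sub_apply]
    obtain ⟨hint, hzero⟩ := integrableOn_and_setIntegral_clm_mul_eq_zero hKm hK₀ hK hKc w hr
    refine ⟨hf ▸ hint.integrable_indicator (measurableSet_annulus r), ?_⟩
    rw [hf, integral_indicator (measurableSet_annulus r), hzero]
  have trans : ∀ a b c, P a b → P b c → P a c := by
    intro a b c hab hbc
    have hf : f a c = fun z => f a b z + f b c z := by ext z; simp only [f]; ring
    exact ⟨hf ▸ hab.1.add hbc.1, by rw [hf, integral_add hab.1 hbc.1, hab.2, hbc.2, add_zero]⟩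
  have symm : ∀ a b, P a b → P b a := by
    intro a b hab
    have hf : f b a = fun z => -f a b z := by ext z; simp only [f]; ring
    exact ⟨hf ▸ hab.1.neg, by rw [hf, integral_neg, hab.2, neg_zero]⟩
  show P (2 ^ j) 1
  induction j using Int.induction_on with
  | zero => exact ⟨by simp [f], by simp [f]⟩
  | succ i ih =>
    refine trans _ _ _ ?_ ih
    rw [zpow_add_one₀ two_ne_zero, mul_comm]
    exact step _ (zpow_pos two_pos _)
  | pred i ih =>
    refine trans _ _ _ (symm _ _ ?_) ih
    rw [show (2 : ℝ) ^ (-(i : ℤ)) = 2 * 2 ^ (-(i : ℤ) - 1) by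
      rw [← zpow_one_add₀ two_ne_zero]; ring_nf]
    exact step _ (zpow_pos two_pos _)

end Cancellation

section Calculus

variable {E F : Type*} [NormedAddCommGroup E] [NormedSpace ℝ E] [NormedAddCommGroup F]
  [NormedSpace ℝ F]

lemma norm_sub_le_of_norm_fderiv_le {f : E → F} (hf : Differentiable ℝ f) {M : ℝ}
    (hM : ∀ x, ‖fderiv ℝ f x‖ ≤ M) (a b : E) : ‖f a - f b‖ ≤ M * ‖a - b‖ :=
  convex_univ.norm_image_sub_le_of_norm_fderiv_le (fun x _ => hf x) (fun x _ => hM x)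
    (mem_univ b) (mem_univ a)

variable {φ : E → ℝ} {M : ℝ}

lemma abs_sub_le_of_norm_fderiv_le (hφ : Differentiable ℝ φ) (hM : ∀ x, ‖fderiv ℝ φ x‖ ≤ M)
    (x z : E) : |φ (x + z) - φ x| ≤ M * ‖z‖ := by
  simpa using norm_sub_le_of_norm_fderiv_le hφ hM (x + z) x

lemma abs_sub_sub_sub_le_mul_min (hφ : Differentiable ℝ φ) (hM : ∀ x, ‖fderiv ℝ φ x‖ ≤ M)
    (x y z : E) : |(φ (x + z) - φ x) - (φ (y + z) - φ y)| ≤ 2 * M * min ‖z‖ ‖x - y‖ := by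
  have hM₀ : 0 ≤ M := (norm_nonneg _).trans (hM 0)
  rw [mul_min_of_nonneg _ _ (by positivity)]
  refine le_min ?_ ?_
  · linarith [abs_sub (φ (x + z) - φ x) (φ (y + z) - φ y),
      abs_sub_le_of_norm_fderiv_le hφ hM x z, abs_sub_le_of_norm_fderiv_le hφ hM y z]
  · have hxy := norm_sub_le_of_norm_fderiv_le hφ hM x y
    have hxyz := norm_sub_le_of_norm_fderiv_le hφ hM (x + z) (y + z)
    rw [add_sub_add_right_eq_sub] at hxyz
    rw [Real.norm_eq_abs] at hxy hxyz
    rw [sub_sub_sub_comm]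
    linarith [abs_sub (φ (x + z) - φ (y + z)) (φ x - φ y)]

lemma abs_sub_sub_fderiv_le (hφ : ContDiff ℝ 2 φ) (hM : ∀ x, ‖fderiv ℝ (fderiv ℝ φ) x‖ ≤ M)
    (x z : E) : |φ (x + z) - φ x - fderiv ℝ φ x z| ≤ M * ‖z‖ ^ 2 := by
  have hM₀ : 0 ≤ M := (norm_nonneg (fderiv ℝ (fderiv ℝ φ) 0)).trans (hM 0)
  have hφ' : Differentiable ℝ (fderiv ℝ φ) :=
    (hφ.fderiv_right (m := 1) (by norm_num)).differentiable (by norm_num)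
  have key := (convex_closedBall x ‖z‖).norm_image_sub_le_of_norm_fderiv_le'
    (φ := fderiv ℝ φ x) (C := M * ‖z‖)
    (fun w _ => (hφ.differentiable (by norm_num)) w) (fun w hw => ?_)
    (mem_closedBall_self (norm_nonneg z)) (show x + z ∈ closedBall x ‖z‖ by simp)
  · simpa [sq, mul_assoc] using key
  · calc ‖fderiv ℝ φ w - fderiv ℝ φ x‖ ≤ M * ‖w - x‖ := norm_sub_le_of_norm_fderiv_le hφ' hM w x
      _ ≤ M * ‖z‖ := by gcongr; exact mem_closedBall_iff_norm.1 hw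

lemma abs_sub_sub_fderiv_sub_le (hφ : ContDiff ℝ 2 φ) (hM : ∀ x, ‖fderiv ℝ (fderiv ℝ φ) x‖ ≤ M)
    (x y z : E) :
    |(φ (x + z) - φ x - fderiv ℝ φ x z) - (φ (y + z) - φ y - fderiv ℝ φ y z)| ≤
      2 * M * ‖x - y‖ * ‖z‖ := by
  have hφd : Differentiable ℝ φ := hφ.differentiable (by norm_num)
  have hφ' : Differentiable ℝ (fderiv ℝ φ) :=
    (hφ.fderiv_right (m := 1) (by norm_num)).differentiable (by norm_num)
  set v := x - y
  have hη : ∀ w, HasFDerivAt (fun w => φ (w + v) - φ w) (fderiv ℝ φ (w + v) - fderiv ℝ φ w) w :=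
    fun w => ((hasFDerivAt_comp_add_right v).2 (hφd _).hasFDerivAt).sub (hφd w).hasFDerivAt
  have hbound : ∀ w, ‖fderiv ℝ φ (w + v) - fderiv ℝ φ w‖ ≤ M * ‖v‖ := fun w => by
    simpa using norm_sub_le_of_norm_fderiv_le hφ' hM (w + v) w
  -- the left side is the first-order Taylor remainder at `y` of `w ↦ φ (w + v) - φ w`
  have key := convex_univ.norm_image_sub_le_of_norm_fderiv_le'
    (φ := fderiv ℝ φ (y + v) - fderiv ℝ φ y) (C := 2 * (M * ‖v‖))
    (fun w _ => (hη w).differentiableAt)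
    (fun w _ => by
      rw [(hη w).fderiv]
      exact (norm_sub_le _ _).trans (by linarith [hbound w, hbound y]))
    (mem_univ y) (mem_univ (y + z))
  have hx : y + v = x := by simp [v]
  have hxz : y + z + v = x + z := by simp [v]; abel
  rw [hxz, hx, add_sub_cancel_left, sub_apply] at key
  rw [← Real.norm_eq_abs, show φ (x + z) - φ x - fderiv ℝ φ x z - (φ (y + z) - φ y - fderiv ℝ φ y z)
    = φ (x + z) - φ (y + z) - (φ x - φ y) - (fderiv ℝ φ x z - fderiv ℝ φ y z) by ring]
  exact key.trans_eq (by ring)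

lemma abs_le_of_support_subset_closedBall [Nontrivial E] {C R : ℝ} (hR : 0 < R)
    (hφ : Differentiable ℝ φ) (hgrad : ∀ x, ‖fderiv ℝ φ x‖ ≤ C / R)
    (hsupp : Function.support φ ⊆ closedBall 0 R) (a : E) : |φ a| ≤ 3 * C := by
  have hC : 0 ≤ C := by
    have := mul_nonneg ((norm_nonneg _).trans (hgrad 0)) hR.le
    rwa [div_mul_cancel₀ _ hR.ne'] at this
  have hzero : ∀ b : E, R < ‖b‖ → φ b = 0 := fun b hb =>
    Function.notMem_support.1 fun h => (mem_closedBall_zero_iff.1 (hsupp h)).not_gt hb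
  rcases le_or_gt ‖a‖ R with ha | ha
  · obtain ⟨v, hv⟩ := exists_norm_eq E (show 0 ≤ 3 * R by positivity)
    have hb : R < ‖a + v‖ := by
      have := norm_sub_le (a + v) a
      rw [add_sub_cancel_left] at this
      linarith
    have := norm_sub_le_of_norm_fderiv_le hφ hgrad a (a + v)
    rw [hzero _ hb, sub_zero, Real.norm_eq_abs, sub_add_cancel_left, norm_neg, hv] at this
    calc |φ a| ≤ C / R * (3 * R) := this
      _ = 3 * C := by field_simp
  · rw [hzero a ha, abs_zero]; positivity

lemma abs_sub_le_six_mul [Nontrivial E] {C R : ℝ} (hR : 0 < R)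
    (hφ : Differentiable ℝ φ) (hgrad : ∀ x, ‖fderiv ℝ φ x‖ ≤ C / R)
    (hsupp : Function.support φ ⊆ closedBall 0 R) (x z : E) : |φ (x + z) - φ x| ≤ 6 * C := by
  linarith [abs_sub (φ (x + z)) (φ x),
    abs_le_of_support_subset_closedBall hR hφ hgrad hsupp (x + z),
    abs_le_of_support_subset_closedBall hR hφ hgrad hsupp x]

lemma abs_sub_sub_sub_indicator_le {M₁ M₂ : ℝ} (hφ : ContDiff ℝ 2 φ)
    (hM₁ : ∀ x, ‖fderiv ℝ φ x‖ ≤ M₁) (hM₂ : ∀ x, ‖fderiv ℝ (fderiv ℝ φ) x‖ ≤ M₂) {r : ℝ}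
    (hr : 0 < r) (x y z : E) :
    |(φ (x + z) - φ x) - (φ (y + z) - φ y) - (ball 0 r).indicator (fderiv ℝ φ x - fderiv ℝ φ y) z|
      ≤ (2 * M₂ + 2 * M₁ * ‖x - y‖ / r ^ 2) * min (‖z‖ ^ 2) (r ^ 2) := by
  have hM₁₀ : 0 ≤ M₁ := (norm_nonneg _).trans (hM₁ 0)
  have hM₂₀ : 0 ≤ M₂ := (norm_nonneg (fderiv ℝ (fderiv ℝ φ) 0)).trans (hM₂ 0)
  refine le_mul_min_sq_of_le (norm_nonneg z) hr (by positivity) (by positivity)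
    (fun hz => ?_) (fun hz => ?_)
  · rw [indicator_of_mem (mem_ball_zero_iff.2 hz), sub_apply, show
      φ (x + z) - φ x - (φ (y + z) - φ y) - (fderiv ℝ φ x z - fderiv ℝ φ y z) =
        (φ (x + z) - φ x - fderiv ℝ φ x z) - (φ (y + z) - φ y - fderiv ℝ φ y z) by ring]
    linarith [abs_sub_sub_fderiv_le hφ hM₂ x z, abs_sub_sub_fderiv_le hφ hM₂ y z,
      abs_sub (φ (x + z) - φ x - fderiv ℝ φ x z) (φ (y + z) - φ y - fderiv ℝ φ y z)]
  · rw [indicator_of_notMem (by simpa using hz), sub_zero]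
    exact (abs_sub_sub_sub_le_mul_min (hφ.differentiable (by norm_num)) hM₁ x y z).trans
      (mul_le_mul_of_nonneg_left (min_le_right _ _) (by positivity))

end Calculus

section Increments

variable {d : ℕ} {s : ℝ}

lemma incr_of_lt_half (hs : s < 1 / 2) (u : Ed d → ℝ) (x y : Ed d) :
    incr d s u x y = u (x + y) - u x :=
  if_pos hs

lemma incr_half (u : Ed d → ℝ) (x y : Ed d) :
    incr d (1 / 2) u x y = u (x + y) - u x - (ball 0 1).indicator (fderiv ℝ u x) y := by
  simp [incr, indicator_apply]

lemma incr_of_half_lt (hs : 1 / 2 < s) (u : Ed d → ℝ) (x y : Ed d) :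
    incr d s u x y = u (x + y) - u x - fderiv ℝ u x y := by
  rw [incr, if_neg hs.not_gt, if_neg hs.ne']

lemma measurable_incr {u : Ed d → ℝ} (hu : Continuous u) (x : Ed d) :
    Measurable (incr d s u x) := by
  rcases lt_trichotomy s (1 / 2) with hs | rfl | hs
  · simp_rw [funext (incr_of_lt_half hs u x)]
    fun_prop
  · simp_rw [funext (incr_half u x)]
    exact (by fun_prop : Measurable fun y => u (x + y) - u x).sub
      ((fderiv ℝ u x).continuous.measurable.indicator measurableSet_ball)
  · simp_rw [funext (incr_of_half_lt hs u x)]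
    fun_prop

lemma opL_sub_opL {K u : Ed d → ℝ} {x y : Ed d} (hx : Integrable fun z => incr d s u x z * K z)
    (hy : Integrable fun z => incr d s u y z * K z) :
    opL d s K u x - opL d s K u y = ∫ z, (incr d s u x z - incr d s u y z) * K z := by
  rw [opL, opL, ← integral_sub hx hy]
  simp_rw [sub_mul]

end Increments

section Pucci

lemma csInf_image_le_csInf_image_add {α : Type*} {S : Set α} {f g : α → ℝ} {E : ℝ} (hE : 0 ≤ E)
    (hf : BddBelow (f '' S)) (hfg : ∀ a ∈ S, f a ≤ g a + E) :
    sInf (f '' S) ≤ sInf (g '' S) + E := by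
  rcases S.eq_empty_or_nonempty with rfl | hS
  · simpa using hE
  rw [← sub_le_iff_le_add]
  refine le_csInf (hS.image g) ?_
  rintro _ ⟨a, ha, rfl⟩
  linarith [csInf_le hf (mem_image_of_mem f ha), hfg a ha]

lemma csSup_image_le_csSup_image_add {α : Type*} {S : Set α} {f g : α → ℝ} {E : ℝ} (hE : 0 ≤ E)
    (hg : BddAbove (g '' S)) (hfg : ∀ a ∈ S, f a ≤ g a + E) :
    sSup (f '' S) ≤ sSup (g '' S) + E := by
  rcases S.eq_empty_or_nonempty with rfl | hS
  · simpa using hE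
  refine csSup_le (hS.image f) ?_
  rintro _ ⟨a, ha, rfl⟩
  linarith [le_csSup hg (mem_image_of_mem g ha), hfg a ha]

variable {d : ℕ} {s lam Lam ρ : ℝ} {u : Ed d → ℝ}

lemma abs_pucci_sub_le {x y : Ed d} {M E : ℝ} (hE : 0 ≤ E)
    (hM : ∀ K ∈ KernelClass d s lam Lam ρ, ∀ v, |opL d s K u v| ≤ M)
    (hxy : x ≠ y → ∀ K ∈ KernelClass d s lam Lam ρ, |opL d s K u x - opL d s K u y| ≤ E) :
    |pucciInf d s lam Lam ρ u x - pucciInf d s lam Lam ρ u y| ≤ E ∧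
      |pucciSup d s lam Lam ρ u x - pucciSup d s lam Lam ρ u y| ≤ E := by
  rcases eq_or_ne x y with rfl | hne
  · simp [hE]
  have hbdd : ∀ v, BddBelow ((fun K => opL d s K u v) '' KernelClass d s lam Lam ρ) ∧
      BddAbove ((fun K => opL d s K u v) '' KernelClass d s lam Lam ρ) := fun v =>
    ⟨⟨-M, by rintro _ ⟨K, hK, rfl⟩; exact (abs_le.1 (hM K hK v)).1⟩,
      ⟨M, by rintro _ ⟨K, hK, rfl⟩; exact (abs_le.1 (hM K hK v)).2⟩⟩
  have h₁ : ∀ K ∈ KernelClass d s lam Lam ρ, opL d s K u x ≤ opL d s K u y + E := fun K hK => by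
    linarith [(abs_sub_le_iff.1 (hxy hne K hK)).1]
  have h₂ : ∀ K ∈ KernelClass d s lam Lam ρ, opL d s K u y ≤ opL d s K u x + E := fun K hK => by
    linarith [(abs_sub_le_iff.1 (hxy hne K hK)).2]
  unfold pucciInf pucciSup
  exact ⟨abs_sub_le_iff.2 ⟨by linarith [csInf_image_le_csInf_image_add hE (hbdd x).1 h₁],
      by linarith [csInf_image_le_csInf_image_add hE (hbdd y).1 h₂]⟩,
    abs_sub_le_iff.2 ⟨by linarith [csSup_image_le_csSup_image_add hE (hbdd y).2 h₁],
      by linarith [csSup_image_le_csSup_image_add hE (hbdd x).2 h₂]⟩⟩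

lemma mul_div_rpow_add {R δ : ℝ} (hR : 0 < R) (hδ : 0 ≤ δ) (B t γ : ℝ) :
    B * δ ^ γ / R ^ (t + γ) = B / R ^ t * (δ / R) ^ γ := by
  rw [Real.div_rpow hδ hR.le, Real.rpow_add hR]
  field_simp

end Pucci

section Regimes

variable {d : ℕ} {s Lam C R : ℝ} {φ : Ed d → ℝ}

lemma nontrivial_ed (hd : 1 ≤ d) : Nontrivial (Ed d) :=
  haveI : Nonempty (Fin d) := ⟨⟨0, hd⟩⟩
  inferInstance

lemma abs_incr_le_of_lt_half (hd : 1 ≤ d) (hs : s < 1 / 2) (hR : 0 < R)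
    (hφ : Differentiable ℝ φ) (hgrad : ∀ x, ‖fderiv ℝ φ x‖ ≤ C / R)
    (hsupp : Function.support φ ⊆ closedBall 0 R) (x z : Ed d) :
    |incr d s φ x z| ≤ C / R * min ‖z‖ (6 * R) := by
  have := nontrivial_ed hd
  rw [incr_of_lt_half hs, mul_min_of_nonneg _ _ ((norm_nonneg _).trans (hgrad 0))]
  refine le_min (abs_sub_le_of_norm_fderiv_le hφ hgrad x z) ?_
  exact (abs_sub_le_six_mul hR hφ hgrad hsupp x z).trans_eq (by field_simp)

lemma abs_incr_le_of_half_lt (hs : 1 / 2 < s) (hR : 0 < R) (hφ : ContDiff ℝ 2 φ)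
    (hgrad : ∀ x, ‖fderiv ℝ φ x‖ ≤ C / R)
    (hhess : ∀ x, ‖fderiv ℝ (fun z => fderiv ℝ φ z) x‖ ≤ C / R ^ 2) (x z : Ed d) :
    |incr d s φ x z| ≤ 2 * (C / R ^ 2) * min (‖z‖ ^ 2) (R * ‖z‖) := by
  have hC : 0 ≤ C / R ^ 2 := (norm_nonneg (fderiv ℝ (fderiv ℝ φ) 0)).trans (hhess 0)
  rw [incr_of_half_lt hs, mul_min_of_nonneg _ _ (by positivity)]
  refine le_min ?_ ?_
  · linarith [abs_sub_sub_fderiv_le hφ hhess x z, show 0 ≤ C / R ^ 2 * ‖z‖ ^ 2 by positivity]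
  · have h₁ : |fderiv ℝ φ x z| ≤ C / R * ‖z‖ := by
      rw [← Real.norm_eq_abs]
      exact ((fderiv ℝ φ x).le_opNorm z).trans (by gcongr; exact hgrad x)
    have h₂ : 2 * (C / R ^ 2) * (R * ‖z‖) = 2 * (C / R * ‖z‖) := by field_simp
    rw [h₂]
    linarith [abs_sub (φ (x + z) - φ x) (fderiv ℝ φ x z),
      abs_sub_le_of_norm_fderiv_le (hφ.differentiable (by norm_num)) hgrad x z]

lemma abs_incr_sub_incr_le_of_half_lt (hs : 1 / 2 < s) (hφ : ContDiff ℝ 2 φ)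
    (hhess : ∀ x, ‖fderiv ℝ (fun z => fderiv ℝ φ z) x‖ ≤ C / R ^ 2) (x y z : Ed d) :
    |incr d s φ x z - incr d s φ y z| ≤ 2 * (C / R ^ 2) * min (‖z‖ ^ 2) (‖x - y‖ * ‖z‖) := by
  have hC : 0 ≤ C / R ^ 2 := (norm_nonneg (fderiv ℝ (fderiv ℝ φ) 0)).trans (hhess 0)
  rw [incr_of_half_lt hs, incr_of_half_lt hs, mul_min_of_nonneg _ _ (by positivity)]
  refine le_min ?_ ?_
  · linarith [abs_sub_sub_fderiv_le hφ hhess x z, abs_sub_sub_fderiv_le hφ hhess y z,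
      abs_sub (φ (x + z) - φ x - fderiv ℝ φ x z) (φ (y + z) - φ y - fderiv ℝ φ y z)]
  · linarith [abs_sub_sub_fderiv_sub_le hφ hhess x y z]

lemma abs_incr_half_le (hd : 1 ≤ d) (hC : 0 ≤ C) (hR : 0 < R) (hφ : ContDiff ℝ 2 φ)
    (hsupp : Function.support φ ⊆ closedBall 0 R) (hgrad : ∀ x, ‖fderiv ℝ φ x‖ ≤ C / R)
    (hhess : ∀ x, ‖fderiv ℝ (fun z => fderiv ℝ φ z) x‖ ≤ C / R ^ 2) (x z : Ed d) :
    |incr d (1 / 2) φ x z| ≤ (C / R ^ 2 + 6 * C) * min (‖z‖ ^ 2) 1 := by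
  have := nontrivial_ed hd
  have key := le_mul_min_sq_of_le (G := |incr d (1 / 2) φ x z|) (norm_nonneg z) one_pos
    (by positivity : 0 ≤ C / R ^ 2) (by positivity : 0 ≤ 6 * C) (fun hz => ?_) (fun hz => ?_)
  · simpa using key
  · rw [incr_half, indicator_of_mem (mem_ball_zero_iff.2 hz)]
    exact abs_sub_sub_fderiv_le hφ hhess x z
  · rw [incr_half, indicator_of_notMem (by simpa using hz), sub_zero]
    exact abs_sub_le_six_mul hR (hφ.differentiable (by norm_num)) hgrad hsupp x z

lemma abs_pucci_sub_le_of_lt_half (hd : 1 ≤ d) (hs₀ : 0 < s) (hs : s < 1 / 2) (hLam : 0 ≤ Lam)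
    (hC : 0 ≤ C) (hR : 0 < R) (hφ : Differentiable ℝ φ) (hgrad : ∀ x, ‖fderiv ℝ φ x‖ ≤ C / R)
    (hsupp : Function.support φ ⊆ closedBall 0 R) (lam ρ : ℝ) (x y : Ed d) :
    |pucciInf d s lam Lam ρ φ x - pucciInf d s lam Lam ρ φ y| ≤
        2 * C * Lam * dyadicConst s 1 0 / R ^ (2 * s) * (‖x - y‖ / R) ^ (1 - 2 * s) ∧
      |pucciSup d s lam Lam ρ φ x - pucciSup d s lam Lam ρ φ y| ≤
        2 * C * Lam * dyadicConst s 1 0 / R ^ (2 * s) * (‖x - y‖ / R) ^ (1 - 2 * s) := by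
  have hc := dyadicConst_pos (s := s) (p := 1) (q := 0) (by linarith) (by linarith)
  have hpt : ∀ K ∈ KernelClass d s lam Lam ρ, ∀ v, Integrable (fun z => incr d s φ v z * K z) ∧
      |opL d s K φ v| ≤ C / R * Lam * dyadicConst s 1 0 * (6 * R) ^ (1 - 2 * s) := by
    rintro K ⟨hKm, hK₀, -, hK, -⟩ v
    exact integrable_mul_and_abs_integral_le hKm hK₀ hK hLam le_rfl (by linarith) (by linarith)
      (by positivity) (by positivity) (measurable_incr hφ.continuous v).aestronglyMeasurable
      fun z => by simpa using abs_incr_le_of_lt_half hd hs hR hφ hgrad hsupp v z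
  refine abs_pucci_sub_le (by positivity) (fun K hK v => (hpt K hK v).2) fun hxy K hK => ?_
  rw [opL_sub_opL (hpt K hK x).1 (hpt K hK y).1]
  obtain ⟨hKm, hK₀, -, hK, -⟩ := hK
  have hδ : 0 < ‖x - y‖ := norm_pos_iff.2 (sub_ne_zero.2 hxy)
  calc _ ≤ 2 * (C / R) * Lam * dyadicConst s 1 0 * ‖x - y‖ ^ (1 - 2 * s) :=
        (integrable_mul_and_abs_integral_le hKm hK₀ hK hLam le_rfl (by linarith) (by linarith) hδ
          (by positivity) ((measurable_incr hφ.continuous x).sub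
            (measurable_incr hφ.continuous y)).aestronglyMeasurable fun z => by
            rw [Pi.sub_apply, incr_of_lt_half hs, incr_of_lt_half hs]
            simpa using abs_sub_sub_sub_le_mul_min hφ hgrad x y z).2
    _ = _ := by
        rw [← mul_div_rpow_add hR hδ.le, show 2 * s + (1 - 2 * s) = 1 by ring, Real.rpow_one]
        ring

lemma abs_pucci_sub_le_of_half_lt (hs : 1 / 2 < s) (hs₁ : s < 1) (hLam : 0 ≤ Lam)
    (hC : 0 ≤ C) (hR : 0 < R) (hφ : ContDiff ℝ 2 φ) (hgrad : ∀ x, ‖fderiv ℝ φ x‖ ≤ C / R)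
    (hhess : ∀ x, ‖fderiv ℝ (fun z => fderiv ℝ φ z) x‖ ≤ C / R ^ 2) (lam ρ : ℝ) (x y : Ed d) :
    |pucciInf d s lam Lam ρ φ x - pucciInf d s lam Lam ρ φ y| ≤
        2 * C * Lam * dyadicConst s 2 1 / R ^ (2 * s) * (‖x - y‖ / R) ^ (2 - 2 * s) ∧
      |pucciSup d s lam Lam ρ φ x - pucciSup d s lam Lam ρ φ y| ≤
        2 * C * Lam * dyadicConst s 2 1 / R ^ (2 * s) * (‖x - y‖ / R) ^ (2 - 2 * s) := by
  have hc := dyadicConst_pos (s := s) (p := 2) (q := 1) (by linarith) (by linarith)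
  have hpt : ∀ K ∈ KernelClass d s lam Lam ρ, ∀ v, Integrable (fun z => incr d s φ v z * K z) ∧
      |opL d s K φ v| ≤ 2 * (C / R ^ 2) * Lam * dyadicConst s 2 1 * R ^ (2 - 2 * s) := by
    rintro K ⟨hKm, hK₀, -, hK, -⟩ v
    exact integrable_mul_and_abs_integral_le hKm hK₀ hK hLam zero_le_one (by linarith)
      (by linarith) hR (by positivity) (measurable_incr hφ.continuous v).aestronglyMeasurable
      fun z => by norm_num; exact abs_incr_le_of_half_lt hs hR hφ hgrad hhess v z
  refine abs_pucci_sub_le (by positivity) (fun K hK v => (hpt K hK v).2) fun hxy K hK => ?_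
  rw [opL_sub_opL (hpt K hK x).1 (hpt K hK y).1]
  obtain ⟨hKm, hK₀, -, hK, -⟩ := hK
  have hδ : 0 < ‖x - y‖ := norm_pos_iff.2 (sub_ne_zero.2 hxy)
  calc _ ≤ 2 * (C / R ^ 2) * Lam * dyadicConst s 2 1 * ‖x - y‖ ^ (2 - 2 * s) :=
        (integrable_mul_and_abs_integral_le hKm hK₀ hK hLam zero_le_one (by linarith)
          (by linarith) hδ (by positivity) ((measurable_incr hφ.continuous x).sub
            (measurable_incr hφ.continuous y)).aestronglyMeasurable fun z => by
            norm_num; exact abs_incr_sub_incr_le_of_half_lt hs hφ hhess x y z).2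
    _ = _ := by
        rw [← mul_div_rpow_add hR hδ.le, show 2 * s + (2 - 2 * s) = 2 by ring, Real.rpow_two]
        ring

/-- Condition (iii) lets us move the cutoff of the gradient term from radius `1` to the dyadic
radius `r ≈ √(‖x - y‖ R)` that balances the two pointwise bounds on the increments. -/
lemma abs_opL_half_sub_le (hLam : 0 ≤ Lam) (hC : 0 < C) (hR : 0 < R) (hφ : ContDiff ℝ 2 φ)
    (hgrad : ∀ x, ‖fderiv ℝ φ x‖ ≤ C / R)
    (hhess : ∀ x, ‖fderiv ℝ (fun z => fderiv ℝ φ z) x‖ ≤ C / R ^ 2) {K : Ed d → ℝ}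
    (hKm : Measurable K) (hK₀ : ∀ z, 0 ≤ K z) (hK : AnnulusBound volume (1 / 2) Lam K)
    (hKc : ∀ r : ℝ, 0 < r → ∫ y in annulus r, K y • y = 0) {x y : Ed d} (hxy : x ≠ y)
    (hx : Integrable fun z => incr d (1 / 2) φ x z * K z)
    (hy : Integrable fun z => incr d (1 / 2) φ y z * K z) :
    |opL d (1 / 2) K φ x - opL d (1 / 2) K φ y| ≤
      6 * C * Lam * dyadicConst (1 / 2) 2 0 / R * √(‖x - y‖ / R) := by
  have hδ : 0 < ‖x - y‖ := norm_pos_iff.2 (sub_ne_zero.2 hxy)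
  have hc := dyadicConst_pos (s := 1 / 2) (p := 2) (q := 0) (by norm_num) (by norm_num)
  set a := 2 * (C / R ^ 2)
  set b := 2 * (C / R) * ‖x - y‖
  obtain ⟨j, hj⟩ := exists_zpow_mul_add_div_le (a := a) (b := b) (by positivity) (by positivity)
  set r : ℝ := 2 ^ j
  have hr : 0 < r := zpow_pos two_pos j
  set w := fderiv ℝ φ x - fderiv ℝ φ y
  set g : Ed d → ℝ := fun z => (φ (x + z) - φ x) - (φ (y + z) - φ y) - (ball 0 r).indicator w z
  have hgm : Measurable g := by
    have := hφ.continuous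
    exact (by fun_prop : Continuous fun z => (φ (x + z) - φ x) - (φ (y + z) - φ y)).measurable.sub
      (w.continuous.measurable.indicator measurableSet_ball)
  have hgK := integrable_mul_and_abs_integral_le (p := 2) (q := 0) (A := a + b / r ^ 2) hKm hK₀ hK
    hLam le_rfl (by norm_num) (by norm_num) hr (by positivity) hgm.aestronglyMeasurable
    fun z => by
      simp only [Real.rpow_two, Real.rpow_zero, sub_zero, mul_one]
      exact abs_sub_sub_sub_indicator_le hφ hgrad hhess hr x y z
  have hχ := integrable_and_integral_indicator_sub_eq_zero hKm hK₀ hK hKc w j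
  have hsplit : (fun z => (incr d (1 / 2) φ x z - incr d (1 / 2) φ y z) * K z) =
      fun z => g z * K z + ((ball 0 r).indicator w z - (ball 0 1).indicator w z) * K z := by
    ext z
    simp only [incr_half, g, w, indicator_apply, sub_apply]
    split_ifs <;> ring
  rw [opL_sub_opL hx hy, hsplit, integral_add hgK.1 hχ.1, hχ.2, add_zero]
  have hab : √(a * b) = 2 * C / R * √(‖x - y‖ / R) := by
    rw [show a * b = (2 * C / R) ^ 2 * (‖x - y‖ / R) by simp only [a, b]; field_simp,
      Real.sqrt_mul (sq_nonneg _), Real.sqrt_sq (by positivity)]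
  calc _ ≤ (a + b / r ^ 2) * Lam * dyadicConst (1 / 2) 2 0 * r ^ (2 - 2 * (1 / 2) : ℝ) := hgK.2
    _ = Lam * dyadicConst (1 / 2) 2 0 * (a * r + b / r) := by
        norm_num only [Real.rpow_one]
        field_simp
    _ ≤ Lam * dyadicConst (1 / 2) 2 0 * (3 * √(a * b)) := by gcongr
    _ = _ := by rw [hab]; ring

lemma abs_pucci_half_sub_le (hd : 1 ≤ d) (hLam : 0 ≤ Lam) (hC : 0 < C) (hR : 0 < R)
    (hφ : ContDiff ℝ 2 φ) (hsupp : Function.support φ ⊆ closedBall 0 R)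
    (hgrad : ∀ x, ‖fderiv ℝ φ x‖ ≤ C / R)
    (hhess : ∀ x, ‖fderiv ℝ (fun z => fderiv ℝ φ z) x‖ ≤ C / R ^ 2) (lam ρ : ℝ) (x y : Ed d) :
    |pucciInf d (1 / 2) lam Lam ρ φ x - pucciInf d (1 / 2) lam Lam ρ φ y| ≤
        6 * C * Lam * dyadicConst (1 / 2) 2 0 / R ^ (2 * (1 / 2 : ℝ)) *
          (‖x - y‖ / R) ^ (1 / 2 : ℝ) ∧
      |pucciSup d (1 / 2) lam Lam ρ φ x - pucciSup d (1 / 2) lam Lam ρ φ y| ≤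
        6 * C * Lam * dyadicConst (1 / 2) 2 0 / R ^ (2 * (1 / 2 : ℝ)) *
          (‖x - y‖ / R) ^ (1 / 2 : ℝ) := by
  have hc := dyadicConst_pos (s := 1 / 2) (p := 2) (q := 0) (by norm_num) (by norm_num)
  have hpt : ∀ K ∈ KernelClass d (1 / 2) lam Lam ρ, ∀ v,
      Integrable (fun z => incr d (1 / 2) φ v z * K z) ∧
      |opL d (1 / 2) K φ v| ≤
        (C / R ^ 2 + 6 * C) * Lam * dyadicConst (1 / 2) 2 0 * 1 ^ (2 - 2 * (1 / 2) : ℝ) := by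
    rintro K ⟨hKm, hK₀, -, hK, -⟩ v
    exact integrable_mul_and_abs_integral_le (p := 2) (q := 0) hKm hK₀ hK hLam le_rfl
      (by norm_num) (by norm_num) one_pos (by positivity)
      (measurable_incr hφ.continuous v).aestronglyMeasurable
      fun z => by simpa using abs_incr_half_le hd hC.le hR hφ hsupp hgrad hhess v z
  refine abs_pucci_sub_le (by positivity) (fun K hK v => (hpt K hK v).2) fun hxy K hK => ?_
  have hKx := (hpt K hK x).1
  have hKy := (hpt K hK y).1
  obtain ⟨hKm, hK₀, -, hK, hKc⟩ := hK
  refine (abs_opL_half_sub_le hLam hC hR hφ hgrad hhess hKm hK₀ hK (hKc rfl) hxy hKx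
    hKy).trans_eq ?_
  rw [Real.sqrt_eq_rpow, show 2 * (1 / 2 : ℝ) = 1 by norm_num, Real.rpow_one]

end Regimes

end PucciHolder

open PucciHolder in
/-- Hölder estimate for the Pucci operators applied to a compactly
supported `C^2` bump function, at the natural scale. -/
theorem statement9 (d : ℕ) (hd : 1 ≤ d) (s Lam C : ℝ) (hs : s ∈ Ioo (0:ℝ) 1)
    (hLam : 0 < Lam) (hC : 0 < C) :
    ∃ Ct γ : ℝ, 0 < Ct ∧ 0 < γ ∧
      (s < 1 / 2 → γ = 1 - 2 * s) ∧ (1 / 2 < s → γ = 2 - 2 * s) ∧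
      (s = 1 / 2 → γ = 1 / 2) ∧
      ∀ lam ρ : ℝ, 0 < lam → lam ≤ Lam → 0 ≤ ρ → ∀ R : ℝ, 0 < R →
        ∀ φ : Ed d → ℝ, ContDiff ℝ 2 φ →
          Function.support φ ⊆ closedBall (0 : Ed d) R →
          (∀ x, ‖fderiv ℝ φ x‖ ≤ C / R) →
          (∀ x, ‖fderiv ℝ (fun z => fderiv ℝ φ z) x‖ ≤ C / R ^ 2) →
          ∀ x y : Ed d,
            |pucciInf d s lam Lam ρ φ x - pucciInf d s lam Lam ρ φ y| ≤
              Ct / R ^ (2 * s) * (‖x - y‖ / R) ^ γ ∧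
            |pucciSup d s lam Lam ρ φ x - pucciSup d s lam Lam ρ φ y| ≤
              Ct / R ^ (2 * s) * (‖x - y‖ / R) ^ γ := by
  obtain ⟨hs₀, hs₁⟩ := hs
  rcases lt_trichotomy s (1 / 2) with hlt | rfl | hgt
  · have hc := dyadicConst_pos (s := s) (p := 1) (q := 0) (by linarith) (by linarith)
    refine ⟨2 * C * Lam * dyadicConst s 1 0, 1 - 2 * s, by positivity, by linarith,
      fun _ => rfl, fun h => absurd h hlt.not_gt, fun h => absurd h hlt.ne, ?_⟩
    intro lam ρ _ _ _ R hR φ hφ hsupp hgrad _ x y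
    exact abs_pucci_sub_le_of_lt_half hd hs₀ hlt hLam.le hC.le hR
      (hφ.differentiable (by norm_num)) hgrad hsupp lam ρ x y
  · have hc := dyadicConst_pos (s := 1 / 2) (p := 2) (q := 0) (by norm_num) (by norm_num)
    refine ⟨6 * C * Lam * dyadicConst (1 / 2) 2 0, 1 / 2, by positivity, by norm_num,
      fun h => absurd h (lt_irrefl _), fun h => absurd h (lt_irrefl _), fun _ => rfl, ?_⟩
    intro lam ρ _ _ _ R hR φ hφ hsupp hgrad hhess x y
    exact abs_pucci_half_sub_le hd hLam.le hC hR hφ hsupp hgrad hhess lam ρ x y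
  · have hc := dyadicConst_pos (s := s) (p := 2) (q := 1) (by linarith) (by linarith)
    refine ⟨2 * C * Lam * dyadicConst s 2 1, 2 - 2 * s, by positivity, by linarith,
      fun h => absurd h hgt.not_gt, fun _ => rfl, fun h => absurd h hgt.ne', ?_⟩
    intro lam ρ _ _ _ R hR φ hφ _ hgrad hhess x y
    exact abs_pucci_sub_le_of_half_lt hgt hs₁ hLam.le hC.le hR hφ hgrad hhess lam ρ x y
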